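/- arXiv:2011.07382 — 4 statements merged into one kernel-verified Lean document; each statement's English description precedes it below -/
import Mathlib

section
/- Let V be a finite-dimensional real vector space, B a nondegenerate bilinear form on V, and T : V →ₗ[ℝ] V →ₗ[ℝ] ℝ an arbitrary bilinear form. If b, c : Basis (Fin n) ℝ V are two bases of V and b', c' : Fin n → V are reciprocal families for b and c respectively, then ∑_{i} T (b i) (b' i) = ∑_{i} T (c i) (c' i). In other words, the super contraction sc(T) = ∑_i T(e_i, e^i) is well defined, independent of the choice of basis. -/
/-! Expanding each `b i` in the basis `c`, whose coordinate functionals are `B (c' k)`, and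
regrouping turns the left-hand side into `∑ k, T (c k) (∑ i, B (c' k) (b i) • b' i)`. The inner
sum is `c' k`: `B` sends `b'` to the dual basis of `b`, so `b'` is linearly independent, hence a
basis by counting dimensions, and `b` is reciprocal to it for the flipped form. -/

namespace Module.Basis

variable {ι R M : Type*} [DecidableEq ι]

def IsReciprocal [CommSemiring R] [AddCommMonoid M] [Module R M] (B : M →ₗ[R] M →ₗ[R] R)
    (b : Basis ι R M) (b' : ι → M) : Prop :=
  ∀ i j, B (b' j) (b i) = if i = j then 1 else 0

namespace IsReciprocal

section CommSemiring

variable [CommSemiring R] [AddCommMonoid M] [Module R M] {B : M →ₗ[R] M →ₗ[R] R}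
  {b : Basis ι R M} {b' : ι → M}

theorem apply_eq_coord (h : b.IsReciprocal B b') (k : ι) : B (b' k) = b.coord k :=
  b.ext fun i => by simp [h i k, Finsupp.single_apply, eq_comm]

theorem sum_smul_basis_eq [Fintype ι] (h : b.IsReciprocal B b') (v : M) :
    ∑ k, B (b' k) v • b k = v := by
  simp [h.apply_eq_coord]

end CommSemiring

theorem linearIndependent [Finite ι] [CommRing R] [AddCommGroup M] [Module R M]
    {B : M →ₗ[R] M →ₗ[R] R} {b : Basis ι R M} {b' : ι → M} (h : b.IsReciprocal B b') :
    LinearIndependent R b' := by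
  refine LinearIndependent.of_comp B ?_
  convert b.dualBasis.linearIndependent
  ext k : 1
  simp [h.apply_eq_coord]

variable [Fintype ι] {K V : Type*} [Field K] [AddCommGroup V] [Module K V]
  {B : V →ₗ[K] V →ₗ[K] K} {b : Basis ι K V} {b' : ι → V}

noncomputable def basis (h : b.IsReciprocal B b') : Basis ι K V :=
  haveI := Module.Finite.of_basis b
  .mk h.linearIndependent
    (h.linearIndependent.span_eq_top_of_card_eq_finrank' (finrank_eq_card_basis b).symm).ge

@[simp]
theorem coe_basis (h : b.IsReciprocal B b') : ⇑h.basis = b' := by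
  simp [basis]

theorem flip (h : b.IsReciprocal B b') : h.basis.IsReciprocal B.flip b := fun i j => by
  simp [h j i, eq_comm]

theorem sum_smul_reciprocal_eq (h : b.IsReciprocal B b') (v : V) :
    ∑ k, B v (b k) • b' k = v := by
  simpa using h.flip.sum_smul_basis_eq v

end IsReciprocal

end Module.Basis

theorem superContraction_wellDefined_general
    {V : Type*} [AddCommGroup V] [Module ℝ V]
    (B : V →ₗ[ℝ] V →ₗ[ℝ] ℝ)
    (T : V →ₗ[ℝ] V →ₗ[ℝ] ℝ) {n : ℕ}
    (b c : Module.Basis (Fin n) ℝ V) (b' c' : Fin n → V)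
    (hb' : ∀ i j, B (b' j) (b i) = if i = j then (1 : ℝ) else 0)
    (hc' : ∀ i j, B (c' j) (c i) = if i = j then (1 : ℝ) else 0) :
    ∑ i : Fin n, T (b i) (b' i) = ∑ i : Fin n, T (c i) (c' i) := by
  have hb : b.IsReciprocal B b' := hb'
  have hc : c.IsReciprocal B c' := hc'
  calc ∑ i, T (b i) (b' i)
      = ∑ i, T (∑ k, B (c' k) (b i) • c k) (b' i) := by simp only [hc.sum_smul_basis_eq]
    _ = ∑ k, T (c k) (∑ i, B (c' k) (b i) • b' i) := by
        simp only [map_sum, map_smul, LinearMap.sum_apply, LinearMap.smul_apply]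
        exact Finset.sum_comm
    _ = ∑ k, T (c k) (c' k) := by simp only [hb.sum_smul_reciprocal_eq]

/-- **Well-definedness of the super contraction.** Let `V` be a finite-dimensional real vector
space, `B` a nondegenerate bilinear form on `V`, and `T` an arbitrary bilinear form. If `b, c`
are two bases of `V` with reciprocal families `b', c'` (i.e. `B (b' j) (b i) = δᵢⱼ` and
`B (c' j) (c i) = δᵢⱼ`), then `∑ i, T (b i) (b' i) = ∑ i, T (c i) (c' i)`. -/
theorem superContraction_wellDefined
    {V : Type*} [AddCommGroup V] [Module ℝ V] [FiniteDimensional ℝ V]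
    (B : V →ₗ[ℝ] V →ₗ[ℝ] ℝ) (hB : LinearMap.BilinForm.Nondegenerate B)
    (T : V →ₗ[ℝ] V →ₗ[ℝ] ℝ) {n : ℕ}
    (b c : Module.Basis (Fin n) ℝ V) (b' c' : Fin n → V)
    (hb' : ∀ i j, B (b' j) (b i) = if i = j then (1 : ℝ) else 0)
    (hc' : ∀ i j, B (c' j) (c i) = if i = j then (1 : ℝ) else 0) :
    ∑ i : Fin n, T (b i) (b' i) = ∑ i : Fin n, T (c i) (c' i) :=
  superContraction_wellDefined_general B T b c b' c' hb' hc'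
end

section
/- Let V be a finite-dimensional real vector space, B a nondegenerate alternating (symplectic) bilinear form on V, b : Basis (Fin n) ℝ V a basis, and b' : Fin n → V a reciprocal family for b. If T : V →ₗ[ℝ] V →ₗ[ℝ] ℝ is a symmetric bilinear form (T x y = T y x for all x, y ∈ V), then ∑_{i} T (b i) (b' i) = 0. -/
/-!
Expanding `b' i` in the basis `b`, the coefficients are `B (b' j) (b' i)`, so the contraction
becomes `∑ i j, B (b' j) (b' i) * T (b i) (b j)`: an antisymmetric matrix (as `B` is alternating)
paired with a symmetric one, which vanishes.
-/

theorem Finset.sum_sum_mul_eq_zero_of_antisymm_of_symm {ι R : Type*} [Fintype ι] [CommRing R]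
    [IsAddTorsionFree R] (c t : ι → ι → R) (hc : ∀ i j, c j i = -c i j)
    (ht : ∀ i j, t j i = t i j) :
    ∑ i, ∑ j, c i j * t i j = 0 := by
  refine self_eq_neg.mp ?_
  calc ∑ i, ∑ j, c i j * t i j = ∑ i, ∑ j, c j i * t j i := Finset.sum_comm
    _ = -∑ i, ∑ j, c i j * t i j := by
      simp only [← Finset.sum_neg_distrib, ← neg_mul, ← hc, ht]

namespace Module.Basis

variable {ι R M : Type*} [Fintype ι] [DecidableEq ι] [CommRing R] [AddCommGroup M] [Module R M]

theorem repr_apply_eq_of_reciprocal (B : M →ₗ[R] M →ₗ[R] R) (b : Basis ι R M) {b' : ι → M}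
    (hb' : ∀ i j, B (b' j) (b i) = if i = j then 1 else 0) (v : M) (j : ι) :
    b.repr v j = B (b' j) v := by
  conv_rhs => rw [← b.sum_repr v]
  simp [map_sum, hb', -sum_repr]

theorem sum_apply_reciprocal_eq_sum_sum (B : M →ₗ[R] M →ₗ[R] R) (b : Basis ι R M) {b' : ι → M}
    (hb' : ∀ i j, B (b' j) (b i) = if i = j then 1 else 0) (T : M →ₗ[R] M →ₗ[R] R) :
    ∑ i, T (b i) (b' i) = ∑ i, ∑ j, B (b' j) (b' i) * T (b i) (b j) := by
  refine Finset.sum_congr rfl fun i _ => ?_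
  conv_lhs => rw [← b.sum_repr (b' i)]
  simp [b.repr_apply_eq_of_reciprocal B hb', -sum_repr]

end Module.Basis

theorem superContraction_eq_zero_of_symm_general
    {V : Type*} [AddCommGroup V] [Module ℝ V]
    (B : V →ₗ[ℝ] V →ₗ[ℝ] ℝ)
    (hBalt : LinearMap.BilinForm.IsAlt B) {n : ℕ}
    (b : Module.Basis (Fin n) ℝ V) (b' : Fin n → V)
    (hb' : ∀ i j, B (b' j) (b i) = if i = j then (1 : ℝ) else 0)
    (T : V →ₗ[ℝ] V →ₗ[ℝ] ℝ) (hT : ∀ x y : V, T x y = T y x) :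
    ∑ i : Fin n, T (b i) (b' i) = 0 := by
  rw [b.sum_apply_reciprocal_eq_sum_sum B hb' T]
  exact Finset.sum_sum_mul_eq_zero_of_antisymm_of_symm _ _
    (fun i j => (hBalt.neg_eq _ _).symm) (fun i j => hT _ _)

/-- If `B` is a nondegenerate alternating (symplectic) bilinear form on a finite-dimensional
real vector space `V`, `b` a basis with reciprocal family `b'`, and `T` is a symmetric bilinear
form (`T x y = T y x`), then the super contraction `∑ i, T (b i) (b' i)` vanishes. -/
theorem superContraction_eq_zero_of_symm
    {V : Type*} [AddCommGroup V] [Module ℝ V] [FiniteDimensional ℝ V]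
    (B : V →ₗ[ℝ] V →ₗ[ℝ] ℝ) (hB : ∀ m : V, (∀ n : V, B m n = 0) → m = 0)
    (hBalt : LinearMap.BilinForm.IsAlt B) {n : ℕ}
    (b : Module.Basis (Fin n) ℝ V) (b' : Fin n → V)
    (hb' : ∀ i j, B (b' j) (b i) = if i = j then (1 : ℝ) else 0)
    (T : V →ₗ[ℝ] V →ₗ[ℝ] ℝ) (hT : ∀ x y : V, T x y = T y x) :
    ∑ i : Fin n, T (b i) (b' i) = 0 :=
  superContraction_eq_zero_of_symm_general B hBalt b b' hb' T hT
end

section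
/- Let B be a super inner product on the super vector space V = V₀ × V₁, let e : Basis (Fin n) ℝ V be a homogeneous basis, and let e' : Fin n → V be a reciprocal family for e with respect to B. Suppose T : V →ₗ[ℝ] V →ₗ[ℝ] ℝ is even (T x y = 0 whenever one of x, y lies in V₀ × {0} and the other lies in {0} × V₁) and super alternating (T x y = - T y x for all x, y ∈ V₀ × {0}, and T x y = T y x for all x, y ∈ {0} × V₁). Then the super contraction of T vanishes: ∑_{i} T (e i) (e' i) = 0. -/
/-!
With the parity involution `P (x₀, x₁) = (x₀, -x₁)`, the super symmetry of `B` and the even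
super alternation of `T` become the identities `B y x = B x (P y)` and `T y x = -T (P x) y`
on all of `V`. Expanding `e' j = ∑ₖ B (e' k) (e' j) • e k`, the first identity gives
`∑ⱼ T (P (e' j)) (e j) = ∑ⱼ T (e j) (e' j)`, and the second then shows that the super
contraction equals its own negative.
-/

open Module

section Reciprocal

variable {R M ι : Type*} [CommRing R] [AddCommGroup M] [Module R M] [DecidableEq ι]
  {B : M →ₗ[R] M →ₗ[R] R} {e : Basis ι R M} {e' : ι → M}

theorem Module.Basis.coord_eq_of_reciprocal
    (he' : ∀ i j, B (e' j) (e i) = if i = j then 1 else 0) (j : ι) :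
    e.coord j = B (e' j) :=
  e.ext fun i => by simp [he', Finsupp.single_apply]

variable [Fintype ι]

theorem Module.Basis.sum_reciprocal_smul
    (he' : ∀ i j, B (e' j) (e i) = if i = j then 1 else 0) (v : M) :
    ∑ k, B (e' k) v • e k = v := by
  conv_rhs => rw [← e.sum_repr v]
  simp [← e.coord_eq_of_reciprocal he']

theorem sum_apply_reciprocal_comm (he' : ∀ i j, B (e' j) (e i) = if i = j then 1 else 0)
    (P : M →ₗ[R] M) (hB : ∀ x y, B y x = B x (P y)) (T : M →ₗ[R] M →ₗ[R] R) :
    ∑ j, T (P (e' j)) (e j) = ∑ j, T (e j) (e' j) := by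
  calc ∑ j, T (P (e' j)) (e j)
      = ∑ j, ∑ k, B (e' k) (P (e' j)) * T (e k) (e j) := by
        refine Finset.sum_congr rfl fun j _ => ?_
        conv_lhs => rw [← e.sum_reciprocal_smul he' (P (e' j))]
        simp [map_sum, LinearMap.sum_apply]
    _ = ∑ k, ∑ j, B (e' j) (e' k) * T (e k) (e j) := by
        rw [Finset.sum_comm]
        simp only [← hB]
    _ = ∑ k, T (e k) (e' k) := by
        refine Finset.sum_congr rfl fun k _ => ?_
        conv_rhs => rw [← e.sum_reciprocal_smul he' (e' k)]
        simp [map_sum]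

theorem sum_apply_reciprocal_eq_zero [IsAddTorsionFree R]
    (he' : ∀ i j, B (e' j) (e i) = if i = j then 1 else 0)
    (P : M →ₗ[R] M) (hB : ∀ x y, B y x = B x (P y))
    (T : M →ₗ[R] M →ₗ[R] R) (hT : ∀ x y, T y x = -T (P x) y) :
    ∑ j, T (e j) (e' j) = 0 := by
  refine self_eq_neg.mp ?_
  calc ∑ j, T (e j) (e' j) = -∑ j, T (P (e' j)) (e j) := by
        rw [← Finset.sum_neg_distrib]
        exact Finset.sum_congr rfl fun j _ => hT _ _
    _ = -∑ j, T (e j) (e' j) := by rw [sum_apply_reciprocal_comm he' P hB T]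

end Reciprocal

section Super

variable {R V₀ V₁ : Type*} [CommRing R] [AddCommGroup V₀] [Module R V₀] [AddCommGroup V₁]
  [Module R V₁]

variable (R V₀ V₁) in
def parity : V₀ × V₁ →ₗ[R] V₀ × V₁ := LinearMap.prodMap LinearMap.id (-LinearMap.id)

@[simp]
theorem parity_apply (x : V₀ × V₁) : parity R V₀ V₁ x = (x.1, -x.2) := rfl

theorem apply_swap_eq_apply_parity {B₀ : V₀ →ₗ[R] V₀ →ₗ[R] R} (hB₀ : LinearMap.BilinForm.IsSymm B₀)
    {B₁ : V₁ →ₗ[R] V₁ →ₗ[R] R} (hB₁ : LinearMap.BilinForm.IsAlt B₁) {B : V₀ × V₁ →ₗ[R] V₀ × V₁ →ₗ[R] R}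
    (hB : ∀ x y, B x y = B₀ x.1 y.1 + B₁ x.2 y.2) (x y : V₀ × V₁) :
    B y x = B x (parity R V₀ V₁ y) := by
  simp [hB, hB₀.eq y.1, hB₁.neg_eq]

theorem apply_swap_eq_neg_apply_parity {T : V₀ × V₁ →ₗ[R] V₀ × V₁ →ₗ[R] R}
    (hT₀₁ : ∀ x y : V₀ × V₁, x.2 = 0 → y.1 = 0 → T x y = 0)
    (hT₁₀ : ∀ x y : V₀ × V₁, x.1 = 0 → y.2 = 0 → T x y = 0)
    (hT₀₀ : ∀ x y : V₀ × V₁, x.2 = 0 → y.2 = 0 → T x y = - T y x)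
    (hT₁₁ : ∀ x y : V₀ × V₁, x.1 = 0 → y.1 = 0 → T x y = T y x) (x y : V₀ × V₁) :
    T y x = -T (parity R V₀ V₁ x) y := by
  obtain ⟨x₀, x₁⟩ := x
  obtain ⟨y₀, y₁⟩ := y
  rw [parity_apply, show ((x₀, -x₁) : V₀ × V₁) = (x₀, 0) - (0, x₁) by simp,
    show ((x₀, x₁) : V₀ × V₁) = (x₀, 0) + (0, x₁) by simp,
    show ((y₀, y₁) : V₀ × V₁) = (y₀, 0) + (0, y₁) by simp]
  simp only [map_add, map_sub, LinearMap.add_apply, LinearMap.sub_apply]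
  rw [hT₀₁ (y₀, 0) (0, x₁) rfl rfl, hT₁₀ (0, y₁) (x₀, 0) rfl rfl,
    hT₀₁ (x₀, 0) (0, y₁) rfl rfl, hT₁₀ (0, x₁) (y₀, 0) rfl rfl,
    hT₀₀ (y₀, 0) (x₀, 0) rfl rfl, hT₁₁ (0, y₁) (0, x₁) rfl rfl]
  ring

end Super

theorem superContraction_eq_zero_of_superAlt_general
    {V₀ V₁ : Type*} [AddCommGroup V₀] [Module ℝ V₀]
    [AddCommGroup V₁] [Module ℝ V₁]
    (B₀ : V₀ →ₗ[ℝ] V₀ →ₗ[ℝ] ℝ)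
    (hB₀symm : LinearMap.BilinForm.IsSymm B₀)
    (B₁ : V₁ →ₗ[ℝ] V₁ →ₗ[ℝ] ℝ)
    (hB₁alt : LinearMap.BilinForm.IsAlt B₁)
    (B : (V₀ × V₁) →ₗ[ℝ] (V₀ × V₁) →ₗ[ℝ] ℝ)
    (hBdef : ∀ x y : V₀ × V₁, B x y = B₀ x.1 y.1 + B₁ x.2 y.2)
    {n : ℕ} (e : Module.Basis (Fin n) ℝ (V₀ × V₁))
    (e' : Fin n → V₀ × V₁)
    (he' : ∀ i j, B (e' j) (e i) = if i = j then (1 : ℝ) else 0)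
    (T : (V₀ × V₁) →ₗ[ℝ] (V₀ × V₁) →ₗ[ℝ] ℝ)
    (hTeven₁ : ∀ x y : V₀ × V₁, x.2 = 0 → y.1 = 0 → T x y = 0)
    (hTeven₂ : ∀ x y : V₀ × V₁, x.1 = 0 → y.2 = 0 → T x y = 0)
    (hTalt : ∀ x y : V₀ × V₁, x.2 = 0 → y.2 = 0 → T x y = - T y x)
    (hTsymm : ∀ x y : V₀ × V₁, x.1 = 0 → y.1 = 0 → T x y = T y x) :
    ∑ i : Fin n, T (e i) (e' i) = 0 :=
  sum_apply_reciprocal_eq_zero he' (parity ℝ V₀ V₁)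
    (apply_swap_eq_apply_parity hB₀symm hB₁alt hBdef) T
    (apply_swap_eq_neg_apply_parity hTeven₁ hTeven₂ hTalt hTsymm)

/-- **Vanishing of the super contraction of an even super alternating bilinear form.**
Let `B` be a super inner product on the super vector space `V = V₀ × V₁` (so
`B (x₀,x₁) (y₀,y₁) = B₀ x₀ y₀ + B₁ x₁ y₁` with `B₀` nondegenerate symmetric and `B₁`
nondegenerate alternating), `e` a homogeneous basis with reciprocal family `e'`.
If `T` is even and super alternating, then `∑ i, T (e i) (e' i) = 0`. -/
theorem superContraction_eq_zero_of_superAlt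
    {V₀ V₁ : Type*} [AddCommGroup V₀] [Module ℝ V₀] [FiniteDimensional ℝ V₀]
    [AddCommGroup V₁] [Module ℝ V₁] [FiniteDimensional ℝ V₁]
    (B₀ : V₀ →ₗ[ℝ] V₀ →ₗ[ℝ] ℝ) (hB₀ : LinearMap.BilinForm.Nondegenerate B₀)
    (hB₀symm : LinearMap.BilinForm.IsSymm B₀)
    (B₁ : V₁ →ₗ[ℝ] V₁ →ₗ[ℝ] ℝ) (hB₁ : LinearMap.BilinForm.Nondegenerate B₁)
    (hB₁alt : LinearMap.BilinForm.IsAlt B₁)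
    (B : (V₀ × V₁) →ₗ[ℝ] (V₀ × V₁) →ₗ[ℝ] ℝ)
    (hBdef : ∀ x y : V₀ × V₁, B x y = B₀ x.1 y.1 + B₁ x.2 y.2)
    {n : ℕ} (e : Module.Basis (Fin n) ℝ (V₀ × V₁))
    (he : ∀ i, (e i).2 = 0 ∨ (e i).1 = 0)
    (e' : Fin n → V₀ × V₁)
    (he' : ∀ i j, B (e' j) (e i) = if i = j then (1 : ℝ) else 0)
    (T : (V₀ × V₁) →ₗ[ℝ] (V₀ × V₁) →ₗ[ℝ] ℝ)
    (hTeven₁ : ∀ x y : V₀ × V₁, x.2 = 0 → y.1 = 0 → T x y = 0)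
    (hTeven₂ : ∀ x y : V₀ × V₁, x.1 = 0 → y.2 = 0 → T x y = 0)
    (hTalt : ∀ x y : V₀ × V₁, x.2 = 0 → y.2 = 0 → T x y = - T y x)
    (hTsymm : ∀ x y : V₀ × V₁, x.1 = 0 → y.1 = 0 → T x y = T y x) :
    ∑ i : Fin n, T (e i) (e' i) = 0 :=
  superContraction_eq_zero_of_superAlt_general B₀ hB₀symm B₁ hB₁alt B hBdef e e' he' T hTeven₁
    hTeven₂ hTalt hTsymm
end

section
/- Let B be a super inner product on the super vector space V = V₀ × V₁, let e : Basis (Fin n) ℝ V be a homogeneous basis, and let e' : Fin n → V be a reciprocal family for e with respect to B. Then the family j ↦ (-1)^{p j} • (e j), where p j = 0 if e j ∈ V₀ × {0} and p j = 1 if e j ∈ {0} × V₁, is a reciprocal family for e' with respect to B. In other words, the reciprocal base of the reciprocal base {e^i} of a homogeneous base {e_i} is {(-1)^{|e_i|} e_i}. -/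
namespace LinearMap.BilinForm

variable {R V₀ V₁ : Type*} [CommRing R] [AddCommGroup V₀] [Module R V₀]
  [AddCommGroup V₁] [Module R V₁] {B₀ : LinearMap.BilinForm R V₀} {B₁ : LinearMap.BilinForm R V₁}
  {B : LinearMap.BilinForm R (V₀ × V₁)}

theorem apply_eq_neg_one_pow_mul_apply_swap (hB₀ : B₀.IsSymm) (hB₁ : B₁.IsAlt)
    (hB : ∀ x y, B x y = B₀ x.1 y.1 + B₁ x.2 y.2) {x : V₀ × V₁} {p : ℕ}
    (hx : (x.2 = 0 ∧ p = 0) ∨ (x.1 = 0 ∧ p = 1)) (y : V₀ × V₁) :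
    B x y = (-1) ^ p * B y x := by
  rw [hB, hB]
  rcases hx with ⟨hx₂, rfl⟩ | ⟨hx₁, rfl⟩
  · simp only [hx₂, map_zero, LinearMap.zero_apply, add_zero, pow_zero, one_mul]
    exact hB₀.eq x.1 y.1
  · simp only [hx₁, map_zero, LinearMap.zero_apply, zero_add, pow_one, neg_one_mul]
    exact (LinearMap.IsAlt.neg hB₁ y.2 x.2).symm

end LinearMap.BilinForm

theorem reciprocal_of_reciprocal_super_general
    {V₀ V₁ : Type*} [AddCommGroup V₀] [Module ℝ V₀]
    [AddCommGroup V₁] [Module ℝ V₁]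
    (B₀ : V₀ →ₗ[ℝ] V₀ →ₗ[ℝ] ℝ)
    (hB₀symm : LinearMap.BilinForm.IsSymm B₀)
    (B₁ : V₁ →ₗ[ℝ] V₁ →ₗ[ℝ] ℝ)
    (hB₁alt : LinearMap.BilinForm.IsAlt B₁)
    (B : (V₀ × V₁) →ₗ[ℝ] (V₀ × V₁) →ₗ[ℝ] ℝ)
    (hBdef : ∀ x y : V₀ × V₁, B x y = B₀ x.1 y.1 + B₁ x.2 y.2)
    {n : ℕ} (e : Module.Basis (Fin n) ℝ (V₀ × V₁)) (p : Fin n → ℕ)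
    (hp : ∀ j, ((e j).2 = 0 ∧ p j = 0) ∨ ((e j).1 = 0 ∧ p j = 1))
    (e' : Fin n → V₀ × V₁)
    (he' : ∀ i j, B (e' j) (e i) = if i = j then (1 : ℝ) else 0) :
    ∀ i j, B (((-1 : ℝ) ^ p j) • e j) (e' i) = if i = j then (1 : ℝ) else 0 := by
  intro i j
  calc B (((-1 : ℝ) ^ p j) • e j) (e' i)
      = (-1) ^ p j * ((-1) ^ p j * B (e' i) (e j)) := by
        rw [map_smul, LinearMap.smul_apply, smul_eq_mul,
          LinearMap.BilinForm.apply_eq_neg_one_pow_mul_apply_swap hB₀symm hB₁alt hBdef (hp j)]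
    _ = B (e' i) (e j) := by rw [← mul_assoc, ← mul_pow, neg_one_mul, neg_neg, one_pow, one_mul]
    _ = if i = j then 1 else 0 := by rw [he', if_congr eq_comm rfl rfl]

/-- **The reciprocal of the reciprocal base.** Let `B` be a super inner product on the super
vector space `V = V₀ × V₁`, `e` a homogeneous basis with parities `p` (so `p j = 0` when
`e j ∈ V₀ × {0}` and `p j = 1` when `e j ∈ {0} × V₁`), and `e'` a reciprocal family for `e`.
Then `j ↦ (-1) ^ (p j) • e j` is a reciprocal family for `e'`. -/
theorem reciprocal_of_reciprocal_super
    {V₀ V₁ : Type*} [AddCommGroup V₀] [Module ℝ V₀] [FiniteDimensional ℝ V₀]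
    [AddCommGroup V₁] [Module ℝ V₁] [FiniteDimensional ℝ V₁]
    (B₀ : V₀ →ₗ[ℝ] V₀ →ₗ[ℝ] ℝ) (hB₀ : LinearMap.BilinForm.Nondegenerate B₀)
    (hB₀symm : LinearMap.BilinForm.IsSymm B₀)
    (B₁ : V₁ →ₗ[ℝ] V₁ →ₗ[ℝ] ℝ) (hB₁ : LinearMap.BilinForm.Nondegenerate B₁)
    (hB₁alt : LinearMap.BilinForm.IsAlt B₁)
    (B : (V₀ × V₁) →ₗ[ℝ] (V₀ × V₁) →ₗ[ℝ] ℝ)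
    (hBdef : ∀ x y : V₀ × V₁, B x y = B₀ x.1 y.1 + B₁ x.2 y.2)
    {n : ℕ} (e : Module.Basis (Fin n) ℝ (V₀ × V₁)) (p : Fin n → ℕ)
    (hp : ∀ j, ((e j).2 = 0 ∧ p j = 0) ∨ ((e j).1 = 0 ∧ p j = 1))
    (e' : Fin n → V₀ × V₁)
    (he' : ∀ i j, B (e' j) (e i) = if i = j then (1 : ℝ) else 0) :
    ∀ i j, B (((-1 : ℝ) ^ p j) • e j) (e' i) = if i = j then (1 : ℝ) else 0 :=
  reciprocal_of_reciprocal_super_general B₀ hB₀symm B₁ hB₁alt B hBdef e p hp e' he'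
end
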